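/- Let x ≤ y in E_J and let φ : x = x₀ ≤ x₁ ≤ ⋯ ≤ x_{k+1} = y be an E_J-multichain. If ℓ(y) − ℓ(x) < k, then 𝓡_φ = 0. -/

import Mathlib

set_option linter.unusedVariables false

open scoped Classical
noncomputable section
namespace WGI

variable (Γ : Type) [AddCommGroup Γ] [LinearOrder Γ] [IsOrderedAddMonoid Γ]

/-- The group ring `ℤ[Γ]`, with basis `{q^γ : γ ∈ Γ}`. -/
abbrev LZ := AddMonoidAlgebra ℤ Γ

/-- The basis element `q^γ` of `ℤ[Γ]`. -/
def qp (γ : Γ) : LZ Γ := AddMonoidAlgebra.single γ 1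

/-- The bar involution of `ℤ[Γ]`, sending `q^γ` to `q^{-γ}`. -/
def barZ : LZ Γ ≃+* LZ Γ :=
  (AddMonoidAlgebra.domCongr ℤ ℤ (AddEquiv.neg Γ)).toRingEquiv

/-- The coefficient `[q^γ] f`. -/
def coeffq (f : LZ Γ) (γ : Γ) : ℤ := f.coeff γ

/-- The degree of `f ∈ ℤ[Γ]`: the maximum `γ` with `[q^γ] f ≠ 0` (`⊥` for `f = 0`). -/
def degq (f : LZ Γ) : WithBot Γ := f.coeff.support.max

/-- The truncation `U_{α/2}(f) = Σ_{2γ > α} [q^γ]f · q^γ`. -/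
def Uhalf (α : Γ) (f : LZ Γ) : LZ Γ := AddMonoidAlgebra.ofCoeff (Finsupp.filter (fun γ => α < γ + γ) f.coeff)

/-- The truncation `L_{α/2}(f) = Σ_{2γ < α} [q^γ]f · q^γ`. -/
def Lhalf (α : Γ) (f : LZ Γ) : LZ Γ := AddMonoidAlgebra.ofCoeff (Finsupp.filter (fun γ => γ + γ < α) f.coeff)

variable {B W : Type} [Group W] {M : CoxeterMatrix B} (cs : CoxeterSystem M W)

/-- The sign `ε_w = (-1)^{ℓ(w)}`. -/
def eps (w : W) : ℤ := (-1) ^ (cs.length w)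

/-- The Bruhat order on `W`: generated by `u < tu` for reflections `t` with `ℓ(u) < ℓ(tu)`. -/
def BruhatLE : W → W → Prop :=
  Relation.ReflTransGen (fun u v => cs.length u < cs.length v ∧ ∃ t, cs.IsReflection t ∧ v = t * u)

/-- The strict Bruhat order. -/
def BruhatLT (u v : W) : Prop := BruhatLE cs u v ∧ u ≠ v

/-- `x` is a suffix of `y` iff `y = z * x` with `ℓ(y) = ℓ(z) + ℓ(x)`; this is the
left weak Bruhat order `x ≤_L y`. -/
def IsSuffix (x y : W) : Prop := ∃ z, y = z * x ∧ cs.length y = cs.length z + cs.length x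

/-- The set `D_J` of minimum coset representatives. -/
def DJ (J : Set B) : Set W := {w | ∀ j ∈ J, cs.length w < cs.length (w * cs.simple j)}

/-- The subgroup `Γ″` of `Γ` generated by the values `L(s)`, `s ∈ S`. -/
def GammaPP (L : W → Γ) : AddSubgroup Γ :=
  AddSubgroup.closure (Set.range fun i : B => L (cs.simple i))

/-- `f` lies in the subring `ℤ[Γ′]` of `ℤ`-linear combinations of products `∏ q_{s_i}^{n_i}`,
equivalently the support of `f` is contained in `Γ″`. -/
def InZGammaPrime (L : W → Γ) (f : LZ Γ) : Prop :=
  ∀ γ ∈ f.coeff.support, γ ∈ GammaPP Γ cs L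

/-- The `𝓡`-polynomial of a length-one multichain:
`𝓡_{x,y} = q_x^{-1} q_y · bar(R_{x,y})`. -/
def Rsingle (L : W → Γ) (Rp : W → W → LZ Γ) (x y : W) : LZ Γ :=
  qp Γ (L y - L x) * barZ Γ (Rp x y)

/-- The `𝓡`-polynomial `𝓡_φ` of a multichain `φ : x = c 0 ≤ c 1 ≤ ⋯ ≤ c (r+1) = y`,
defined recursively by `𝓡_φ = 𝓡_{x,x₁} · U_{(L(y)-L(x₁))/2}(q_{x₁}^{-1} q_y bar(𝓡_{φ'}))`
where `φ'` is the tail of `φ`. -/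
def RchainAux (L : W → Γ) (Rp : W → W → LZ Γ) : (r : ℕ) → (Fin (r + 2) → W) → LZ Γ
  | 0, c => Rsingle Γ L Rp (c 0) (c 1)
  | r + 1, c =>
      Rsingle Γ L Rp (c 0) (c 1) *
        Uhalf Γ (L (c (Fin.last (r + 2))) - L (c 1))
          (qp Γ (L (c (Fin.last (r + 2))) - L (c 1)) *
            barZ Γ (RchainAux L Rp r (fun i => c i.succ)))

/-- The `𝓡*`-polynomial `𝓡*_φ` of a multichain `φ : x = c 0 ≤ ⋯ ≤ c (r+1) = y`,
defined recursively by `𝓡*_φ = U_{(L(x_r)-L(x))/2}(q_x^{-1} q_{x_r} bar(𝓡*_{φ'})) · 𝓡*_{x_r,y}`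
where `φ'` is the initial segment of `φ`. -/
def RstarAux (L : W → Γ) (Rt : W → W → LZ Γ) : (r : ℕ) → (Fin (r + 2) → W) → LZ Γ
  | 0, c => Rsingle Γ L Rt (c 0) (c 1)
  | r + 1, c =>
      Uhalf Γ (L (c ⟨r + 1, by omega⟩) - L (c 0))
          (qp Γ (L (c ⟨r + 1, by omega⟩) - L (c 0)) *
            barZ Γ (RstarAux L Rt r (fun i => c i.castSucc))) *
        Rsingle Γ L Rt (c ⟨r + 1, by omega⟩) (c (Fin.last (r + 2)))

/-- An `E_J`-multichain `x = x₀ ≤ x₁ ≤ ⋯ ≤ x_{r+1} = y` (Bruhat order) with all entries in `E`. -/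
structure MChain (E : Set W) (x y : W) where
  r : ℕ
  c : Fin (r + 2) → W
  first : c 0 = x
  last : c (Fin.last (r + 1)) = y
  mem : ∀ i, c i ∈ E
  mono : ∀ i : Fin (r + 1), BruhatLE cs (c i.castSucc) (c i.succ)

/-- An `E_J`-multichain is an `E_J`-chain when all steps are strict. -/
def MChain.IsStrict {E : Set W} {x y : W} (φ : MChain cs E x y) : Prop :=
  ∀ i : Fin (φ.r + 1), BruhatLT cs (φ.c i.castSucc) (φ.c i.succ)

end WGI

/-!
First, `R_{u,u} = 1`. Writing `Γ_u = T_s Γ_{su}` for a left descent `s` of `u` and using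
`bar(T_s) = q_s⁻¹ T_s + (q_s⁻¹ - 1)`, induction on `ℓ(u)` gives `bar(Γ_u) ≡ q_u⁻¹ Γ_u` modulo the
span of the `Γ_v` with `ℓ(v) < ℓ(u)`; comparing with the expansion defining the `R_{x,u}` gives
`R_{u,u} = 1`.

Next, induction along the chain shows that if `ℓ(y) - ℓ(x) ≤ k` then only powers `q^γ` with
`2γ ≥ L(y) - L(x)` occur in `𝓡_φ`. At a repeated step `x = x₁` the factor `𝓡_{x,x}` is `1`
and `U` keeps only `2γ > L(y) - L(x)`. At a strict step the tail satisfies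
`ℓ(y) - ℓ(x₁) ≤ k - 1`, so `q_{x₁}⁻¹ q_y bar(𝓡_{φ'})` involves only `2γ ≤ L(y) - L(x₁)`, which
`U` removes. If `ℓ(y) - ℓ(x) < k`, the tail of `φ` already satisfies this bound, so the
`U`-factor of `𝓡_φ` vanishes.
-/

namespace WGI

section Coxeter

variable {B W : Type} [Group W] {M : CoxeterMatrix B} {cs : CoxeterSystem M W}

theorem BruhatLE.length_le {u v : W} (h : BruhatLE cs u v) : cs.length u ≤ cs.length v := by
  induction h with
  | refl => exact le_rfl
  | tail _ hstep ih => exact ih.trans hstep.1.le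

theorem BruhatLE.eq_of_length_le {u v : W} (h : BruhatLE cs u v)
    (hl : cs.length v ≤ cs.length u) : u = v := by
  induction h with
  | refl => rfl
  | tail hle hstep _ =>
    exact absurd hl (not_le.mpr ((BruhatLE.length_le hle).trans_lt hstep.1))

theorem BruhatLT.length_lt {u v : W} (h : BruhatLT cs u v) : cs.length u < cs.length v :=
  h.1.length_le.lt_of_ne fun hl => h.2 (h.1.eq_of_length_le hl.ge)

theorem eps_mul_self (w : W) : eps cs w * eps cs w = 1 := by
  rw [eps, ← pow_add, ← two_mul, pow_mul, neg_one_sq, one_pow]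

end Coxeter

section GroupRing

variable {Γ : Type} [AddCommGroup Γ]

theorem qp_add (a d : Γ) : qp Γ (a + d) = qp Γ a * qp Γ d := by
  rw [qp, qp, qp, AddMonoidAlgebra.single_mul_single, mul_one]

theorem qp_zero : qp Γ 0 = 1 := AddMonoidAlgebra.one_def.symm

theorem qp_ne_zero (a : Γ) : qp Γ a ≠ 0 :=
  fun h => one_ne_zero (AddMonoidAlgebra.single_eq_zero.mp h)

theorem qp_mul_qp_neg (a : Γ) : qp Γ a * qp Γ (-a) = 1 := by
  rw [← qp_add, add_neg_cancel, qp_zero]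

theorem barZ_coeff (f : LZ Γ) (γ : Γ) : (barZ Γ f).coeff γ = f.coeff (-γ) := by
  simp [barZ, AddMonoidAlgebra.coeff_domCongr]

variable [LinearOrder Γ] [IsOrderedAddMonoid Γ]

/-- The coefficient of `q^α · bar f` at `γ` is that of `f` at `α - γ`, and `2(α - γ) < α`
whenever `2γ > α`. -/
theorem Uhalf_qp_mul_barZ_eq_zero (α : Γ) (f : LZ Γ) (hf : ∀ δ, δ + δ < α → f.coeff δ = 0) :
    Uhalf Γ α (qp Γ α * barZ Γ f) = 0 := by
  ext γ
  rw [Uhalf, AddMonoidAlgebra.coeff_ofCoeff, Finsupp.filter_apply, AddMonoidAlgebra.coeff_zero,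
    Finsupp.zero_apply]
  split_ifs with hγ
  · rw [qp, AddMonoidAlgebra.coeff_single_mul_apply, one_mul, barZ_coeff]
    apply hf
    calc -(-α + γ) + -(-α + γ) = α + (α - (γ + γ)) := by abel
      _ < α + 0 := add_lt_add_right (sub_neg.mpr hγ) α
      _ = α := add_zero α
  · rfl

end GroupRing

section Chains

variable {Γ : Type} [AddCommGroup Γ] {W : Type} {L : W → Γ} {Rp : W → W → LZ Γ}

theorem Rsingle_self {u : W} (h : Rp u u = 1) : Rsingle Γ L Rp u u = 1 := by
  rw [Rsingle, h, sub_self, qp_zero, map_one, one_mul]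

variable [LinearOrder Γ] [IsOrderedAddMonoid Γ]

theorem RchainAux_succ_eq_zero (m : ℕ) (c : Fin (m + 3) → W)
    (h : ∀ δ, δ + δ < L (c (Fin.last (m + 2))) - L (c 1) →
      (RchainAux Γ L Rp m fun i => c i.succ).coeff δ = 0) :
    RchainAux Γ L Rp (m + 1) c = 0 := by
  rw [RchainAux, Uhalf_qp_mul_barZ_eq_zero _ _ h, mul_zero]

variable {B : Type} [Group W] {M : CoxeterMatrix B} {cs : CoxeterSystem M W}

theorem tail_mono {m : ℕ} {c : Fin (m + 3) → W}
    (hmono : ∀ i : Fin (m + 2), BruhatLE cs (c i.castSucc) (c i.succ)) (i : Fin (m + 1)) :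
    BruhatLE cs (c i.castSucc.succ) (c i.succ.succ) :=
  Fin.succ_castSucc i ▸ hmono i.succ

theorem RchainAux_coeff_eq_zero_of_length_le (m : ℕ) (c : Fin (m + 2) → W)
    (hR : ∀ i, Rp (c i) (c i) = 1)
    (hmono : ∀ i : Fin (m + 1), BruhatLE cs (c i.castSucc) (c i.succ))
    (hlen : cs.length (c (Fin.last (m + 1))) ≤ cs.length (c 0) + m)
    (γ : Γ) (hγ : γ + γ < L (c (Fin.last (m + 1))) - L (c 0)) :
    (RchainAux Γ L Rp m c).coeff γ = 0 := by
  induction m generalizing γ with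
  | zero =>
    have h01 : c 0 = c 1 := (hmono 0).eq_of_length_le hlen
    have hγ0 : γ ≠ 0 := by
      rintro rfl
      simp [h01] at hγ
    rw [RchainAux, ← h01, Rsingle_self (hR 0), ← qp_zero, qp, AddMonoidAlgebra.coeff_single,
      Finsupp.single_eq_of_ne hγ0]
  | succ m ih =>
    rcases (hmono 0).length_le.eq_or_lt with hl | hl
    · have h01 : c 0 = c 1 := (hmono 0).eq_of_length_le hl.ge
      rw [RchainAux, ← h01, Rsingle_self (hR 0), one_mul, Uhalf, AddMonoidAlgebra.coeff_ofCoeff,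
        Finsupp.filter_apply, if_neg hγ.not_gt]
    · refine congrArg (fun f : LZ Γ => f.coeff γ) (RchainAux_succ_eq_zero m c fun δ hδ => ?_)
      exact ih (fun i => c i.succ) (fun i => hR i.succ) (tail_mono hmono)
        (by
          simp only [Fin.succ_last, Nat.succ_eq_add_one, Fin.succ_zero_eq_one,
            Fin.castSucc_zero] at hl hlen ⊢
          omega) δ hδ

theorem RchainAux_eq_zero_of_length_lt (r : ℕ) (c : Fin (r + 2) → W)
    (hR : ∀ i, Rp (c i) (c i) = 1)
    (hmono : ∀ i : Fin (r + 1), BruhatLE cs (c i.castSucc) (c i.succ))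
    (hlen : cs.length (c (Fin.last (r + 1))) < cs.length (c 0) + r) :
    RchainAux Γ L Rp r c = 0 := by
  cases r with
  | zero => exact absurd (hmono 0).length_le hlen.not_ge
  | succ m =>
    have h01 := (hmono 0).length_le
    simp only [Fin.castSucc_zero, Fin.succ_zero_eq_one] at h01
    exact RchainAux_succ_eq_zero m c fun δ hδ =>
      RchainAux_coeff_eq_zero_of_length_le m _ (fun i => hR i.succ) (tail_mono hmono)
        (by simp only [Fin.succ_last, Nat.succ_eq_add_one, Fin.succ_zero_eq_one]; omega) δ hδ

end Chains

theorem repr_finsum_mem_smul {R W MM : Type*} [Semiring R] [AddCommMonoid MM] [Module R MM]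
    {E : Set W} {G : W → MM} (b : Module.Basis E R MM) (hb : ∀ y, b y = G y) (a : W → R)
    {u : W} (hu : u ∈ E) (hne : ∑ᶠ x ∈ E, a x • G x ≠ 0) :
    b.repr (∑ᶠ x ∈ E, a x • G x) ⟨u, hu⟩ = a u := by
  have hfin : (E ∩ Function.support fun x => a x • G x).Finite :=
    Set.not_infinite.mp fun h => hne (finsum_mem_eq_zero_of_infinite h)
  have hcoord : ∀ x ∈ E, b.repr (G x) ⟨u, hu⟩ = if x = u then 1 else 0 := by
    intro x hx
    rw [← hb ⟨x, hx⟩, b.repr_self, Finsupp.single_apply]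
    exact if_congr Subtype.mk_eq_mk rfl rfl
  rw [← b.coord_apply, ← LinearMap.toAddMonoidHom_coe, AddMonoidHom.map_finsum_mem' _ hfin,
    finsum_mem_def, finsum_eq_single _ u fun x hx => ?_]
  · simp [Set.indicator_of_mem hu, hcoord u hu]
  · by_cases hxE : x ∈ E
    · simp [Set.indicator_of_mem hxE, hcoord x hxE, hx]
    · simp [Set.indicator_of_notMem hxE]

section WGraphModule

variable (Γ : Type) [AddCommGroup Γ] {B W : Type} [Group W] {M : CoxeterMatrix B}
  (cs : CoxeterSystem M W) {H : Type} [Ring H] [Algebra (LZ Γ) H]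
  {MM : Type} [AddCommGroup MM] [Module (LZ Γ) MM] [Module H MM]
  (E : Set W) (G : W → MM)

def lowerSpan (n : ℕ) : Submodule (LZ Γ) MM :=
  Submodule.span (LZ Γ) (G '' {v | v ∈ E ∧ cs.length v < n})

structure IsWGraphIdealAction (L : W → Γ) (T : Module.Basis W (LZ Γ) H) (J : Set B) : Prop where
  mem_of_isSuffix : ∀ y ∈ E, ∀ x : W, IsSuffix cs x y → x ∈ E
  sd : ∀ (i : B) (y : W), y ∈ E → cs.length (cs.simple i * y) < cs.length y →
    T (cs.simple i) • G y =
      qp Γ (L (cs.simple i)) • G (cs.simple i * y) + (qp Γ (L (cs.simple i)) - 1) • G y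
  sa : ∀ (i : B) (y : W), y ∈ E → cs.length y < cs.length (cs.simple i * y) →
    cs.simple i * y ∈ E → T (cs.simple i) • G y = G (cs.simple i * y)
  wd : ∀ (i : B) (y : W), y ∈ E → cs.length y < cs.length (cs.simple i * y) →
    cs.simple i * y ∉ DJ cs J → T (cs.simple i) • G y = - G y
  wa : ∀ (i : B) (y : W), y ∈ E → cs.length y < cs.length (cs.simple i * y) →
    cs.simple i * y ∈ DJ cs J → cs.simple i * y ∉ E →
    ∃ rr : W → LZ Γ, (∀ z : W, rr z ≠ 0 → z ∈ E ∧ BruhatLT cs z (cs.simple i * y)) ∧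
      (∀ z : W, ∃ g : LZ Γ, rr z = qp Γ (L (cs.simple i)) * g) ∧
      {z : W | rr z ≠ 0}.Finite ∧
      T (cs.simple i) • G y = qp Γ (L (cs.simple i)) • G y - ∑ᶠ z : W, rr z • G z

variable {Γ cs E G}

theorem G_mem_lowerSpan {v : W} {n : ℕ} (hv : v ∈ E) (hn : cs.length v < n) :
    G v ∈ lowerSpan Γ cs E G n :=
  Submodule.subset_span ⟨v, ⟨hv, hn⟩, rfl⟩

theorem lowerSpan_mono : Monotone (lowerSpan Γ cs E G) := fun _ _ hmn =>
  Submodule.span_mono (Set.image_mono fun _ hv => ⟨hv.1, hv.2.trans_le hmn⟩)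

theorem smul_mem_lowerSpan_succ [IsScalarTower (LZ Γ) H MM] {n : ℕ} (h : H)
    (hgen : ∀ v ∈ E, cs.length v < n → h • G v ∈ lowerSpan Γ cs E G (n + 1))
    {m : MM} (hm : m ∈ lowerSpan Γ cs E G n) : h • m ∈ lowerSpan Γ cs E G (n + 1) := by
  induction hm using Submodule.span_induction with
  | mem _ hx => obtain ⟨v, ⟨hv, hvn⟩, rfl⟩ := hx; exact hgen v hv hvn
  | zero => rw [smul_zero]; exact zero_mem _
  | add _ _ _ _ hx hy => rw [smul_add]; exact add_mem hx hy
  | smul a _ _ hx => rw [smul_comm]; exact Submodule.smul_mem _ a hx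

theorem repr_eq_zero_of_mem_lowerSpan (b : Module.Basis E (LZ Γ) MM) (hb : ∀ y, b y = G y)
    {u : W} (hu : u ∈ E) {n : ℕ} (hn : n ≤ cs.length u) {m : MM}
    (hm : m ∈ lowerSpan Γ cs E G n) : b.repr m ⟨u, hu⟩ = 0 := by
  induction hm using Submodule.span_induction with
  | mem _ hx =>
    obtain ⟨v, ⟨hv, hvn⟩, rfl⟩ := hx
    have hvu : (⟨v, hv⟩ : E) ≠ ⟨u, hu⟩ := fun h =>
      absurd hn (not_le.mpr (Subtype.mk.inj h ▸ hvn))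
    rw [← hb ⟨v, hv⟩, b.repr_self, Finsupp.single_eq_of_ne hvu.symm]
  | zero => rw [map_zero, Finsupp.zero_apply]
  | add _ _ _ _ hx hy => rw [map_add, Finsupp.add_apply, hx, hy, add_zero]
  | smul a _ _ hx => rw [map_smul, Finsupp.smul_apply, hx, smul_zero]

variable {L : W → Γ} {T : Module.Basis W (LZ Γ) H} {J : Set B}

namespace IsWGraphIdealAction

theorem simple_mul_mem (hA : IsWGraphIdealAction Γ cs E G L T J) {i : B} {v : W} (hv : v ∈ E)
    (hi : cs.length (cs.simple i * v) + 1 = cs.length v) : cs.simple i * v ∈ E :=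
  hA.mem_of_isSuffix v hv _
    ⟨cs.simple i, (cs.simple_mul_simple_cancel_left i).symm, by rw [cs.length_simple]; omega⟩

theorem T_simple_smul_mem_lowerSpan (hA : IsWGraphIdealAction Γ cs E G L T J) (i : B)
    {v : W} (hv : v ∈ E) : T (cs.simple i) • G v ∈ lowerSpan Γ cs E G (cs.length v + 2) := by
  rcases cs.length_simple_mul v i with hasc | hdesc
  · have hlt : cs.length v < cs.length (cs.simple i * v) := by omega
    by_cases hE : cs.simple i * v ∈ E
    · rw [hA.sa i v hv hlt hE]
      exact G_mem_lowerSpan hE (by omega)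
    by_cases hD : cs.simple i * v ∈ DJ cs J
    · obtain ⟨rr, hrr, -, -, hT⟩ := hA.wa i v hv hlt hD hE
      rw [hT]
      refine sub_mem (Submodule.smul_mem _ _ (G_mem_lowerSpan hv (by omega))) ?_
      refine finsum_induction _ (zero_mem _) (fun _ _ => add_mem) fun z => ?_
      by_cases hz : rr z = 0
      · rw [hz, zero_smul]
        exact zero_mem _
      · obtain ⟨hzE, hzlt⟩ := hrr z hz
        exact Submodule.smul_mem _ _ (G_mem_lowerSpan hzE (by have := hzlt.length_lt; omega))
    · rw [hA.wd i v hv hlt hD]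
      exact neg_mem (G_mem_lowerSpan hv (by omega))
  · rw [hA.sd i v hv (by omega)]
    exact add_mem
      (Submodule.smul_mem _ _ (G_mem_lowerSpan (hA.simple_mul_mem hv hdesc) (by omega)))
      (Submodule.smul_mem _ _ (G_mem_lowerSpan hv (by omega)))

theorem barH_T_simple_smul_mem_lowerSpan [IsScalarTower (LZ Γ) H MM]
    (hA : IsWGraphIdealAction Γ cs E G L T J) {barH : H ≃+* H} {i : B}
    (hbarHT : barH (T (cs.simple i)) =
      qp Γ (-(L (cs.simple i))) • T (cs.simple i) + (qp Γ (-(L (cs.simple i))) - 1) • (1 : H))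
    {n : ℕ} {m : MM} (hm : m ∈ lowerSpan Γ cs E G n) :
    barH (T (cs.simple i)) • m ∈ lowerSpan Γ cs E G (n + 1) := by
  refine smul_mem_lowerSpan_succ _ (fun v hv hvn => ?_) hm
  rw [hbarHT, add_smul, smul_assoc, smul_assoc, one_smul]
  exact add_mem
    (Submodule.smul_mem _ _ (lowerSpan_mono (by omega) (hA.T_simple_smul_mem_lowerSpan i hv)))
    (Submodule.smul_mem _ _ (G_mem_lowerSpan hv (by omega)))

theorem barM_G_sub_mem_lowerSpan [IsScalarTower (LZ Γ) H MM]
    (hA : IsWGraphIdealAction Γ cs E G L T J)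
    (hLadd : ∀ u v : W, cs.length (u * v) = cs.length u + cs.length v → L (u * v) = L u + L v)
    {barH : H ≃+* H}
    (hbarHT : ∀ i : B, barH (T (cs.simple i)) =
      qp Γ (-(L (cs.simple i))) • T (cs.simple i) + (qp Γ (-(L (cs.simple i))) - 1) • (1 : H))
    {barM : MM → MM} (hbarMone : barM (G 1) = G 1)
    (hbarMT : ∀ (w y : W), y ∈ E → barM (T w • G y) = barH (T w) • barM (G y))
    {u : W} (hu : u ∈ E) : barM (G u) - qp Γ (-L u) • G u ∈ lowerSpan Γ cs E G (cs.length u) := by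
  obtain ⟨n, hn⟩ : ∃ n, cs.length u = n := ⟨_, rfl⟩
  induction n generalizing u with
  | zero =>
    obtain rfl := cs.length_eq_zero_iff.mp hn
    have hL1 : L 1 = 0 := by simpa using hLadd 1 1
    rw [hbarMone, hL1, neg_zero, qp_zero, one_smul, sub_self]
    exact zero_mem _
  | succ n ih =>
    obtain ⟨i, hi⟩ := cs.exists_leftDescent_of_ne_one (w := u) fun h => by
      simp [h] at hn
    have hlen := cs.isLeftDescent_iff.mp hi
    set w := cs.simple i * u
    have hw : w ∈ E := hA.simple_mul_mem hu hlen
    have hsw : cs.simple i * w = u := cs.simple_mul_simple_cancel_left i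
    have hGu : G u = T (cs.simple i) • G w := by
      rw [hA.sa i w hw (by rw [hsw]; omega) (by rw [hsw]; exact hu), hsw]
    have hLu : L u = L (cs.simple i) + L w := by
      rw [← hLadd _ _ (by rw [hsw, cs.length_simple]; omega), hsw]
    have hbarT : barH (T (cs.simple i)) • G w =
        qp Γ (-L (cs.simple i)) • G u + (qp Γ (-L (cs.simple i)) - 1) • G w := by
      rw [hbarHT, add_smul, smul_assoc, smul_assoc, one_smul, ← hGu]
    have hsplit : barM (G u) - qp Γ (-L u) • G u =
        (qp Γ (-L w) * (qp Γ (-L (cs.simple i)) - 1)) • G w +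
          barH (T (cs.simple i)) • (barM (G w) - qp Γ (-L w) • G w) := by
      have hbarGu : barM (G u) = barH (T (cs.simple i)) • barM (G w) := by
        rw [hGu, hbarMT _ _ hw]
      rw [hbarGu, smul_sub, smul_comm (barH _) (qp Γ (-L w)) (G w), hbarT, hLu, neg_add, qp_add]
      generalize barH (T (cs.simple i)) • barM (G w) = X
      module
    have hlw : cs.length w = n := by omega
    have hw_mem := ih hw hlw
    rw [hlw] at hw_mem
    rw [hsplit, hn]
    exact add_mem (Submodule.smul_mem _ _ (G_mem_lowerSpan hw (by omega)))
      (hA.barH_T_simple_smul_mem_lowerSpan (hbarHT i) hw_mem)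

theorem Rp_self [IsScalarTower (LZ Γ) H MM] (hA : IsWGraphIdealAction Γ cs E G L T J)
    (hLadd : ∀ u v : W, cs.length (u * v) = cs.length u + cs.length v → L (u * v) = L u + L v)
    {barH : H ≃+* H}
    (hbarHT : ∀ i : B, barH (T (cs.simple i)) =
      qp Γ (-(L (cs.simple i))) • T (cs.simple i) + (qp Γ (-(L (cs.simple i))) - 1) • (1 : H))
    {barM : MM → MM} (hbarMone : barM (G 1) = G 1)
    (hbarMT : ∀ (w y : W), y ∈ E → barM (T w • G y) = barH (T w) • barM (G y))
    (b : Module.Basis E (LZ Γ) MM) (hb : ∀ y, b y = G y) {Rp : W → W → LZ Γ}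
    (hRpdef : ∀ y ∈ E, barM (G y) =
      ∑ᶠ x ∈ E, (((eps cs x * eps cs y : ℤ) : LZ Γ) * qp Γ (-(L y)) * Rp x y) • G x)
    {u : W} (hu : u ∈ E) : Rp u u = 1 := by
  have hGu : b.repr (G u) ⟨u, hu⟩ = 1 := by
    rw [← hb ⟨u, hu⟩, b.repr_self, Finsupp.single_eq_same]
  have hcoeff : b.repr (barM (G u)) ⟨u, hu⟩ = qp Γ (-L u) := by
    have h := repr_eq_zero_of_mem_lowerSpan b hb hu le_rfl
      (hA.barM_G_sub_mem_lowerSpan hLadd hbarHT hbarMone hbarMT hu)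
    rwa [map_sub, Finsupp.sub_apply, map_smul, Finsupp.smul_apply, hGu, smul_eq_mul, mul_one,
      sub_eq_zero] at h
  have hne : barM (G u) ≠ 0 := fun h =>
    qp_ne_zero _ (by rw [← hcoeff, h, map_zero, Finsupp.zero_apply])
  rw [hRpdef u hu] at hcoeff hne
  rw [repr_finsum_mem_smul b hb _ hu hne, eps_mul_self, Int.cast_one, one_mul] at hcoeff
  calc Rp u u = qp Γ (L u) * (qp Γ (-L u) * Rp u u) := by rw [← mul_assoc, qp_mul_qp_neg, one_mul]
    _ = 1 := by rw [hcoeff, qp_mul_qp_neg]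

end IsWGraphIdealAction

end WGraphModule

theorem stmt_10_general
    {B W : Type} [Group W] {M : CoxeterMatrix B} (cs : CoxeterSystem M W)
    (Γ : Type) [AddCommGroup Γ] [LinearOrder Γ] [IsOrderedAddMonoid Γ]
    -- `L` is a weight function on `W` with values in `Γ`, nonnegative on simple reflections
    (L : W → Γ)
    (hLadd : ∀ u v : W, cs.length (u * v) = cs.length u + cs.length v →
      L (u * v) = L u + L v)
    -- `H` is the Hecke algebra of `(W, S, L)`, free over `ℤ[Γ]` with basis `{T_w}`
    {H : Type} [Ring H] [Algebra (LZ Γ) H]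
    (T : Module.Basis W (LZ Γ) H)
    -- the bar involution on `H`
    (barH : H ≃+* H)
    (hbarHT : ∀ i : B, barH (T (cs.simple i)) =
      qp Γ (-(L (cs.simple i))) • T (cs.simple i) + (qp Γ (-(L (cs.simple i))) - 1) • (1 : H))
    -- `E = E_J ⊆ D_J` is an ideal in the left weak Bruhat order
    (J : Set B) (E : Set W)
    (hIdeal : ∀ y ∈ E, ∀ x : W, IsSuffix cs x y → x ∈ E)
    -- `E` is a `W`-graph ideal: the module `M(E_J, L)` with basis `{Γ_y := G y : y ∈ E}`
    {MM : Type} [AddCommGroup MM] [Module (LZ Γ) MM] [Module H MM]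
    [IsScalarTower (LZ Γ) H MM]
    (G : W → MM)
    (hGbasis : ∃ b : Module.Basis ↥E (LZ Γ) MM, ∀ y : ↥E, b y = G ↑y)
    (hSD : ∀ (i : B) (y : W), y ∈ E → cs.length (cs.simple i * y) < cs.length y →
      T (cs.simple i) • G y =
        qp Γ (L (cs.simple i)) • G (cs.simple i * y) + (qp Γ (L (cs.simple i)) - 1) • G y)
    (hSA : ∀ (i : B) (y : W), y ∈ E → cs.length y < cs.length (cs.simple i * y) →
      cs.simple i * y ∈ E → T (cs.simple i) • G y = G (cs.simple i * y))
    (hWD : ∀ (i : B) (y : W), y ∈ E → cs.length y < cs.length (cs.simple i * y) →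
      cs.simple i * y ∉ DJ cs J → T (cs.simple i) • G y = - G y)
    (hWA : ∀ (i : B) (y : W), y ∈ E → cs.length y < cs.length (cs.simple i * y) →
      cs.simple i * y ∈ DJ cs J → cs.simple i * y ∉ E →
      ∃ rr : W → LZ Γ, (∀ z : W, rr z ≠ 0 → z ∈ E ∧ BruhatLT cs z (cs.simple i * y)) ∧
        (∀ z : W, ∃ g : LZ Γ, rr z = qp Γ (L (cs.simple i)) * g) ∧
        {z : W | rr z ≠ 0}.Finite ∧
        T (cs.simple i) • G y = qp Γ (L (cs.simple i)) • G y - ∑ᶠ z : W, rr z • G z)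
    -- the `ℤ[Γ]`-semilinear bar involution on `M(E_J, L)`
    (barM : MM → MM)
    (hbarMone : barM (G 1) = G 1)
    (hbarMT : ∀ (w y : W), y ∈ E → barM (T w • G y) = barH (T w) • barM (G y))
    -- the weighted `R`-polynomials
    (Rp : W → W → LZ Γ)
    (hRpdef : ∀ y ∈ E, barM (G y) =
      ∑ᶠ x ∈ E, (((eps cs x * eps cs y : ℤ) : LZ Γ) * qp Γ (-(L y)) * Rp x y) • G x)
    (x y : W)
    (r : ℕ) (c : Fin (r + 2) → W)
    (hc0 : c 0 = x) (hclast : c (Fin.last (r + 1)) = y)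
    (hcmem : ∀ i, c i ∈ E)
    (hcmono : ∀ i : Fin (r + 1), BruhatLE cs (c i.castSucc) (c i.succ))
    (hlen : (cs.length y : ℤ) - (cs.length x : ℤ) < (r : ℤ))
    :
    RchainAux Γ L Rp r c = 0 := by
  obtain ⟨b, hb⟩ := hGbasis
  have hA : IsWGraphIdealAction Γ cs E G L T J := ⟨hIdeal, hSD, hSA, hWD, hWA⟩
  have hR : ∀ i, Rp (c i) (c i) = 1 := fun i =>
    hA.Rp_self hLadd hbarHT hbarMone hbarMT b hb hRpdef (hcmem i)
  refine RchainAux_eq_zero_of_length_lt r c hR hcmono ?_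
  rw [hc0, hclast]
  omega

theorem stmt_10
    {B W : Type} [Group W] {M : CoxeterMatrix B} (cs : CoxeterSystem M W)
    (Γ : Type) [AddCommGroup Γ] [LinearOrder Γ] [IsOrderedAddMonoid Γ]
    -- `L` is a weight function on `W` with values in `Γ`, nonnegative on simple reflections
    (L : W → Γ)
    (hLadd : ∀ u v : W, cs.length (u * v) = cs.length u + cs.length v →
      L (u * v) = L u + L v)
    (hLpos : ∀ i : B, (0 : Γ) ≤ L (cs.simple i))
    -- `H` is the Hecke algebra of `(W, S, L)`, free over `ℤ[Γ]` with basis `{T_w}`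
    {H : Type} [Ring H] [Algebra (LZ Γ) H]
    (T : Module.Basis W (LZ Γ) H)
    (hTone : T 1 = 1)
    (hTmul₁ : ∀ (i : B) (w : W), cs.length w < cs.length (cs.simple i * w) →
      T (cs.simple i) * T w = T (cs.simple i * w))
    (hTmul₂ : ∀ (i : B) (w : W), cs.length (cs.simple i * w) < cs.length w →
      T (cs.simple i) * T w =
        qp Γ (L (cs.simple i)) • T (cs.simple i * w) + (qp Γ (L (cs.simple i)) - 1) • T w)
    -- the bar involution on `H`
    (barH : H ≃+* H)
    (hbarHsmul : ∀ (a : LZ Γ) (h : H), barH (a • h) = barZ Γ a • barH h)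
    (hbarHT : ∀ i : B, barH (T (cs.simple i)) =
      qp Γ (-(L (cs.simple i))) • T (cs.simple i) + (qp Γ (-(L (cs.simple i))) - 1) • (1 : H))
    -- `E = E_J ⊆ D_J` is an ideal in the left weak Bruhat order
    (J : Set B) (E : Set W)
    (hED : E ⊆ DJ cs J)
    (hIdeal : ∀ y ∈ E, ∀ x : W, IsSuffix cs x y → x ∈ E)
    -- `E` is a `W`-graph ideal: the module `M(E_J, L)` with basis `{Γ_y := G y : y ∈ E}`
    {MM : Type} [AddCommGroup MM] [Module (LZ Γ) MM] [Module H MM]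
    [IsScalarTower (LZ Γ) H MM]
    (G : W → MM)
    (hGbasis : ∃ b : Module.Basis ↥E (LZ Γ) MM, ∀ y : ↥E, b y = G ↑y)
    (hSD : ∀ (i : B) (y : W), y ∈ E → cs.length (cs.simple i * y) < cs.length y →
      T (cs.simple i) • G y =
        qp Γ (L (cs.simple i)) • G (cs.simple i * y) + (qp Γ (L (cs.simple i)) - 1) • G y)
    (hSA : ∀ (i : B) (y : W), y ∈ E → cs.length y < cs.length (cs.simple i * y) →
      cs.simple i * y ∈ E → T (cs.simple i) • G y = G (cs.simple i * y))
    (hWD : ∀ (i : B) (y : W), y ∈ E → cs.length y < cs.length (cs.simple i * y) →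
      cs.simple i * y ∉ DJ cs J → T (cs.simple i) • G y = - G y)
    (hWA : ∀ (i : B) (y : W), y ∈ E → cs.length y < cs.length (cs.simple i * y) →
      cs.simple i * y ∈ DJ cs J → cs.simple i * y ∉ E →
      ∃ rr : W → LZ Γ, (∀ z : W, rr z ≠ 0 → z ∈ E ∧ BruhatLT cs z (cs.simple i * y)) ∧
        (∀ z : W, ∃ g : LZ Γ, rr z = qp Γ (L (cs.simple i)) * g) ∧
        {z : W | rr z ≠ 0}.Finite ∧
        T (cs.simple i) • G y = qp Γ (L (cs.simple i)) • G y - ∑ᶠ z : W, rr z • G z)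
    -- the `ℤ[Γ]`-semilinear bar involution on `M(E_J, L)`
    (barM : MM → MM)
    (hbarMadd : ∀ m m' : MM, barM (m + m') = barM m + barM m')
    (hbarMsmul : ∀ (a : LZ Γ) (m : MM), barM (a • m) = barZ Γ a • barM m)
    (hbarMone : barM (G 1) = G 1)
    (hbarMT : ∀ (w y : W), y ∈ E → barM (T w • G y) = barH (T w) • barM (G y))
    -- the weighted `R`-polynomials
    (Rp : W → W → LZ Γ)
    (hRpzero : ∀ x y : W, x ∉ E ∨ y ∉ E → Rp x y = 0)
    (hRpdef : ∀ y ∈ E, barM (G y) =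
      ∑ᶠ x ∈ E, (((eps cs x * eps cs y : ℤ) : LZ Γ) * qp Γ (-(L y)) * Rp x y) • G x)
    (x y : W) (hx : x ∈ E) (hy : y ∈ E)
    (hxy : BruhatLE cs x y)
    (r : ℕ) (c : Fin (r + 2) → W)
    (hc0 : c 0 = x) (hclast : c (Fin.last (r + 1)) = y)
    (hcmem : ∀ i, c i ∈ E)
    (hcmono : ∀ i : Fin (r + 1), BruhatLE cs (c i.castSucc) (c i.succ))
    (hlen : (cs.length y : ℤ) - (cs.length x : ℤ) < (r : ℤ))
    :
    RchainAux Γ L Rp r c = 0 :=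
  stmt_10_general cs Γ L hLadd T barH hbarHT J E hIdeal G hGbasis hSD hSA hWD hWA barM hbarMone
    hbarMT Rp hRpdef x y r c hc0 hclast hcmem hcmono hlen

end WGI
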